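/- lim_{R → ∞} ( ∫₀^R √(1 + r³) dr − (2/5)·R^{5/2} ) = (2/5)·𝔅, i.e., the limit equals (2/5)·Γ(1/2)·Γ(1/3)/Γ(5/6). Equivalently, ∫₀^∞ ( √(1 + r³) − r^{3/2} ) dr = (2/5)·Γ(1/2)·Γ(1/3)/Γ(5/6). -/

import Mathlib

open Filter Topology intervalIntegral MeasureTheory Set

noncomputable def gg : ℝ → ℝ := fun r => (Real.sqrt (1 + r ^ 3))⁻¹
noncomputable def phi : ℝ → ℝ := fun x => (x⁻¹ - 1) ^ ((1:ℝ)/3)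
noncomputable def phid : ℝ → ℝ := fun x =>
  (1/3) * (x⁻¹ - 1) ^ ((1:ℝ)/3 - 1) * (-(x ^ 2)⁻¹)

lemma inner_pos {x : ℝ} (hx : x ∈ Ioo (0:ℝ) 1) : 0 < x⁻¹ - 1 := by
  rw [sub_pos]
  exact (one_lt_inv₀ hx.1).mpr hx.2

lemma lem_deriv : ∀ x ∈ Ioo (0:ℝ) 1, HasDerivWithinAt phi (phid x) (Ioo 0 1) x := by
  intro x hx
  have h1 : HasDerivAt (fun x : ℝ => x⁻¹ - 1) (-(x^2)⁻¹) x :=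
    (hasDerivAt_inv (ne_of_gt hx.1)).sub_const 1
  have h2 := (Real.hasDerivAt_rpow_const (x := x⁻¹ - 1) (p := (1:ℝ)/3)
    (Or.inl (ne_of_gt (inner_pos hx)))).comp x h1
  exact h2.hasDerivWithinAt

lemma lem_inj : InjOn phi (Ioo (0:ℝ) 1) := by
  intro a ha b hb hab
  have h1 : (a⁻¹ - 1) = (b⁻¹ - 1) := by
    have := congrArg (fun y : ℝ => y ^ (3:ℕ)) hab
    simpa [phi, ← Real.rpow_natCast _ 3, ← Real.rpow_mul (inner_pos ha).le,
      ← Real.rpow_mul (inner_pos hb).le] using this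
  have : a⁻¹ = b⁻¹ := by linarith
  exact inv_injective this


lemma lem_image : phi '' Ioo 0 1 = Ioi (0:ℝ) := by
  ext r
  simp only [mem_image, mem_Ioi]
  constructor
  · rintro ⟨x, hx, rfl⟩
    exact Real.rpow_pos_of_pos (inner_pos hx) _
  · intro hr
    have h1 : (0:ℝ) < 1 + r ^ 3 := by positivity
    refine ⟨(1 + r ^ 3)⁻¹, ⟨by positivity, ?_⟩, ?_⟩
    · rw [inv_lt_one_iff₀]
      right; nlinarith [pow_pos hr 3]
    · show ((((1:ℝ) + r ^ 3)⁻¹)⁻¹ - 1) ^ ((1:ℝ)/3) = r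
      rw [inv_inv, show (1:ℝ) + r ^ 3 - 1 = r ^ 3 by ring,
        ← Real.rpow_natCast r 3, ← Real.rpow_mul hr.le]
      norm_num

lemma lem_pointwise : ∀ x ∈ Ioo (0:ℝ) 1,
    |phid x| * gg (phi x) = (1/3) * (x ^ ((1:ℝ)/6-1) * (1-x) ^ ((1:ℝ)/3-1)) := by
  intro x hx
  have hx0 : 0 < x := hx.1
  have hx1 : 0 < 1 - x := by linarith [hx.2]
  have hip := inner_pos hx
  have hcube : (phi x) ^ 3 = x⁻¹ - 1 := by
    rw [show phi x = (x⁻¹ - 1) ^ ((1:ℝ)/3) from rfl,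
      ← Real.rpow_natCast ((x⁻¹ - 1) ^ ((1:ℝ)/3)) 3, ← Real.rpow_mul hip.le]
    norm_num
  have hgg : gg (phi x) = x ^ ((1:ℝ)/2) := by
    rw [show gg (phi x) = (Real.sqrt (1 + (phi x) ^ 3))⁻¹ from rfl, hcube,
      show (1:ℝ) + (x⁻¹ - 1) = x⁻¹ by ring,
      Real.sqrt_eq_rpow, Real.inv_rpow hx0.le, inv_inv]
  have hA : 0 < (x⁻¹ - 1) ^ ((1:ℝ)/3 - 1) := Real.rpow_pos_of_pos hip _
  have habs : |phid x| = (1/3) * (x⁻¹ - 1) ^ ((1:ℝ)/3 - 1) * (x ^ 2)⁻¹ := by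
    rw [show phid x = (1/3) * (x⁻¹ - 1) ^ ((1:ℝ)/3 - 1) * (-(x ^ 2)⁻¹) from rfl,
      abs_mul, abs_neg, abs_inv, abs_of_pos (mul_pos (by norm_num) hA),
      abs_of_pos (pow_pos hx0 2)]
  rw [habs, hgg, show x⁻¹ - 1 = (1 - x) * x⁻¹ by field_simp,
    Real.mul_rpow hx1.le (inv_nonneg.mpr hx0.le), Real.inv_rpow hx0.le]
  have hxpow : ((x ^ ((1:ℝ)/3 - 1))⁻¹) * (x ^ 2)⁻¹ * x ^ ((1:ℝ)/2) = x ^ ((1:ℝ)/6 - 1) := by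
    rw [← Real.rpow_natCast x 2, ← Real.rpow_neg hx0.le, ← Real.rpow_neg hx0.le,
      ← Real.rpow_add hx0, ← Real.rpow_add hx0]
    norm_num
  linear_combination ((1:ℝ)/3 * (1 - x) ^ ((1:ℝ)/3 - 1)) * hxpow

lemma gamma_arith :
    (3/5) * ((1/3) * (Real.Gamma (1/6) * Real.Gamma (1/3) / Real.Gamma (1/2))) =
      (2/5) * (Real.Gamma (1/2) * Real.Gamma (1/3) / Real.Gamma (5/6)) := by
  have h6 := Real.Gamma_mul_Gamma_one_sub (1/6)
  rw [show (1:ℝ) - 1/6 = 5/6 by norm_num, show Real.pi * (1/6) = Real.pi / 6 by ring,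
    Real.sin_pi_div_six] at h6
  have h2 : Real.Gamma (1/2) * Real.Gamma (1/2) = Real.pi := by
    rw [Real.Gamma_one_half_eq]; exact Real.mul_self_sqrt Real.pi_pos.le
  have key : Real.Gamma (1/6) * Real.Gamma (5/6) =
      2 * (Real.Gamma (1/2) * Real.Gamma (1/2)) := by
    rw [h2, h6]; ring
  have p2 : (0:ℝ) < Real.Gamma (1/2) := Real.Gamma_pos_of_pos (by norm_num)
  have p56 : (0:ℝ) < Real.Gamma (5/6) := Real.Gamma_pos_of_pos (by norm_num)
  field_simp
  nlinarith [key, Real.Gamma_pos_of_pos (show (0:ℝ) < 1/3 by norm_num)]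


lemma cplx_eq (u v : ℝ) : ∀ x ∈ Set.Icc (0:ℝ) 1,
    (x:ℂ) ^ ((u:ℂ) - 1) * ((1:ℂ) - x) ^ ((v:ℂ) - 1) =
      ((x ^ (u-1) * (1-x) ^ (v-1) : ℝ) : ℂ) := by
  intro x hx
  have h1 : ((x ^ (u-1) : ℝ) : ℂ) = (x:ℂ) ^ ((u:ℂ) - 1) := by
    rw [Complex.ofReal_cpow hx.1]; norm_num
  have h2 : (((1-x) ^ (v-1) : ℝ) : ℂ) = ((1:ℂ) - x) ^ ((v:ℂ) - 1) := by
    rw [Complex.ofReal_cpow (by linarith [hx.2])]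
    push_cast; norm_num
  rw [Complex.ofReal_mul, h1, h2]

lemma lem_betaInt (u v : ℝ) (hu : 0 < u) (hv : 0 < v) :
    IntervalIntegrable (fun x : ℝ => x ^ (u-1) * (1-x) ^ (v-1)) volume 0 1 := by
  have hc : IntervalIntegrable
      (fun x : ℝ => (x:ℂ) ^ ((u:ℂ) - 1) * ((1:ℂ) - x) ^ ((v:ℂ) - 1)) volume 0 1 :=
    Complex.betaIntegral_convergent (by simpa using hu) (by simpa using hv)
  rw [intervalIntegrable_iff_integrableOn_Icc_of_le (by norm_num : (0:ℝ) ≤ 1)] at hc ⊢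
  have hc2 : IntegrableOn
      (fun x : ℝ => ((x ^ (u-1) * (1-x) ^ (v-1) : ℝ) : ℂ)) (Set.Icc 0 1) volume :=
    hc.congr_fun (fun x hx => cplx_eq u v x hx) measurableSet_Icc
  simpa [Complex.ofReal_re, IntegrableOn] using hc2.re

lemma lem_beta (u v : ℝ) (hu : 0 < u) (hv : 0 < v) :
    (∫ x in (0:ℝ)..1, x ^ (u-1) * (1-x) ^ (v-1)) =
      Real.Gamma u * Real.Gamma v / Real.Gamma (u+v) := by
  have hG := Complex.Gamma_mul_Gamma_eq_betaIntegral
    (s := (u:ℂ)) (t := (v:ℂ)) (by simpa using hu) (by simpa using hv)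
  have hB : Complex.betaIntegral u v =
      ((∫ x in (0:ℝ)..1, x ^ (u-1) * (1-x) ^ (v-1) : ℝ) : ℂ) := by
    rw [Complex.betaIntegral, ← intervalIntegral.integral_ofReal]
    refine intervalIntegral.integral_congr fun x hx => ?_
    have hx' : x ∈ Set.Icc (0:ℝ) 1 := by
      rwa [Set.uIcc_of_le (by norm_num : (0:ℝ) ≤ 1)] at hx
    exact cplx_eq u v x hx'
  rw [hB, ← Complex.ofReal_add, Complex.Gamma_ofReal, Complex.Gamma_ofReal,
    Complex.Gamma_ofReal] at hG
  have huv : Real.Gamma (u+v) ≠ 0 := (Real.Gamma_pos_of_pos (by linarith)).ne'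
  have : Real.Gamma u * Real.Gamma v =
      Real.Gamma (u+v) * ∫ x in (0:ℝ)..1, x ^ (u-1) * (1-x) ^ (v-1) := by
    exact_mod_cast hG
  field_simp
  linarith [this]


lemma beta_integrableOn : IntegrableOn
    (fun x : ℝ => (1/3) * (x ^ ((1:ℝ)/6-1) * (1-x) ^ ((1:ℝ)/3-1))) (Ioo 0 1) volume := by
  have h := lem_betaInt (1/6) (1/3) (by norm_num) (by norm_num)
  rw [intervalIntegrable_iff_integrableOn_Ioo_of_le (by norm_num : (0:ℝ) ≤ 1)] at h
  exact (h.const_mul (1/3))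

lemma J_integrable : IntegrableOn gg (Ioi (0:ℝ)) := by
  rw [← lem_image,
    integrableOn_image_iff_integrableOn_abs_deriv_smul measurableSet_Ioo lem_deriv lem_inj]
  refine beta_integrableOn.congr_fun (fun x hx => ?_) measurableSet_Ioo
  rw [smul_eq_mul, lem_pointwise x hx]

lemma J_value : ∫ r in Ioi (0:ℝ), gg r =
    (1/3) * (Real.Gamma (1/6) * Real.Gamma (1/3) / Real.Gamma (1/2)) := by
  rw [← lem_image,
    integral_image_eq_integral_abs_deriv_smul measurableSet_Ioo lem_deriv lem_inj]
  rw [setIntegral_congr_fun measurableSet_Ioo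
    (fun x hx => by rw [smul_eq_mul, lem_pointwise x hx])]
  rw [← MeasureTheory.integral_Ioc_eq_integral_Ioo,
    ← intervalIntegral.integral_of_le (by norm_num : (0:ℝ) ≤ 1),
    intervalIntegral.integral_const_mul,
    lem_beta (1/6) (1/3) (by norm_num) (by norm_num)]
  norm_num


lemma sq_pos_of_nonneg {r : ℝ} (hr : 0 ≤ r) : 0 < 1 + r ^ 3 := by positivity

lemma cont_sqrt : Continuous fun r : ℝ => Real.sqrt (1 + r ^ 3) := by
  exact Real.continuous_sqrt.comp (by continuity)

lemma hasDeriv_F {r : ℝ} (hr : 0 ≤ r) :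
    HasDerivAt (fun t : ℝ => 2/5 * (t * Real.sqrt (1 + t ^ 3)))
      (Real.sqrt (1 + r ^ 3) - 3/5 * gg r) r := by
  have h1 : (0:ℝ) < 1 + r ^ 3 := sq_pos_of_nonneg hr
  have hinner : HasDerivAt (fun t : ℝ => 1 + t ^ 3) (3 * r ^ 2) r := by
    simpa using (hasDerivAt_pow 3 r).const_add 1
  have hs : HasDerivAt (fun t : ℝ => Real.sqrt (1 + t ^ 3))
      (1 / (2 * Real.sqrt (1 + r ^ 3)) * (3 * r ^ 2)) r :=
    (Real.hasDerivAt_sqrt h1.ne').comp r hinner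
  have hm : HasDerivAt (fun t : ℝ => t * Real.sqrt (1 + t ^ 3))
      (1 * Real.sqrt (1 + r ^ 3) + r * (1 / (2 * Real.sqrt (1 + r ^ 3)) * (3 * r ^ 2))) r :=
    (hasDerivAt_id r).mul hs
  have := hm.const_mul (2/5 : ℝ)
  refine this.congr_deriv ?_; symm
  have hsq : Real.sqrt (1 + r ^ 3) ^ 2 = 1 + r ^ 3 := Real.sq_sqrt h1.le
  have hspos : 0 < Real.sqrt (1 + r ^ 3) := Real.sqrt_pos.mpr h1
  rw [show gg r = (Real.sqrt (1 + r ^ 3))⁻¹ from rfl]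
  field_simp
  nlinarith [hsq]

lemma key_ftc (R : ℝ) (hR : 0 ≤ R) :
    ∫ r in (0:ℝ)..R, Real.sqrt (1 + r ^ 3) =
      2/5 * (R * Real.sqrt (1 + R ^ 3)) + 3/5 * ∫ r in (0:ℝ)..R, gg r := by
  have hico : uIcc (0:ℝ) R = Icc 0 R := uIcc_of_le hR
  have hcont2 : ContinuousOn gg (uIcc 0 R) := by
    rw [hico]
    intro x hx
    exact ((cont_sqrt.continuousAt.continuousWithinAt).inv₀
      (Real.sqrt_pos.mpr (sq_pos_of_nonneg hx.1)).ne')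
  have i1 : IntervalIntegrable (fun r : ℝ => Real.sqrt (1 + r ^ 3)) volume 0 R :=
    cont_sqrt.intervalIntegrable 0 R
  have i2 : IntervalIntegrable gg volume 0 R := hcont2.intervalIntegrable
  have hftc := intervalIntegral.integral_eq_sub_of_hasDerivAt
    (f := fun t : ℝ => 2/5 * (t * Real.sqrt (1 + t ^ 3)))
    (f' := fun r => Real.sqrt (1 + r ^ 3) - 3/5 * gg r)
    (fun t ht => hasDeriv_F (by rw [hico] at ht; exact ht.1))
    (i1.sub (i2.const_mul (3/5)))
  rw [intervalIntegral.integral_sub i1 (i2.const_mul (3/5)),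
    intervalIntegral.integral_const_mul] at hftc
  norm_num at hftc
  linarith [hftc]

lemma tail_zero :
    Tendsto (fun R : ℝ => 2/5 * (R * Real.sqrt (1 + R ^ 3)) - 2/5 * R ^ ((5:ℝ)/2))
      atTop (𝓝 0) := by
  have key : ∀ R : ℝ, 1 ≤ R →
      0 ≤ R * Real.sqrt (1 + R ^ 3) - R ^ ((5:ℝ)/2) ∧
      R * Real.sqrt (1 + R ^ 3) - R ^ ((5:ℝ)/2) ≤ R ^ (-(1:ℝ)/2) := by
    intro R hR
    have hR0 : (0:ℝ) < R := by linarith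
    have h1 : (0:ℝ) < 1 + R ^ 3 := by positivity
    have ht : R ^ ((3:ℝ)/2) = Real.sqrt (R ^ 3) := by
      rw [Real.sqrt_eq_rpow, ← Real.rpow_natCast R 3, ← Real.rpow_mul hR0.le]
      norm_num
    have h52 : R ^ ((5:ℝ)/2) = R * R ^ ((3:ℝ)/2) := by
      rw [← Real.rpow_one_add' hR0.le (by norm_num)]
      norm_num
    have hm12 : R ^ (-(1:ℝ)/2) = R / R ^ ((3:ℝ)/2) := by
      rw [show (-(1:ℝ)/2) = 1 - 3/2 by norm_num, Real.rpow_sub hR0, Real.rpow_one]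
    have hsq : Real.sqrt (1 + R ^ 3) ^ 2 = 1 + R ^ 3 := Real.sq_sqrt h1.le
    have htq : (R ^ ((3:ℝ)/2)) ^ 2 = R ^ 3 := by
      rw [ht]; exact Real.sq_sqrt (by positivity)
    have hts : R ^ ((3:ℝ)/2) ≤ Real.sqrt (1 + R ^ 3) := by
      rw [ht]; exact Real.sqrt_le_sqrt (by linarith)
    have htpos : (0:ℝ) < R ^ ((3:ℝ)/2) := by positivity
    have hspos : (0:ℝ) < Real.sqrt (1 + R ^ 3) := Real.sqrt_pos.mpr h1
    constructor
    · rw [h52]; nlinarith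
    · rw [h52, hm12, le_div_iff₀ htpos]
      nlinarith [mul_le_mul_of_nonneg_left hts hspos.le, hsq, htq, hR0.le]
  have hub : Tendsto (fun R : ℝ => R ^ (-(1:ℝ)/2)) atTop (𝓝 0) := by
    have h := tendsto_rpow_neg_atTop (y := (1:ℝ)/2) (by norm_num)
    simpa [neg_div] using h
  have h0 : Tendsto (fun R : ℝ => R * Real.sqrt (1 + R ^ 3) - R ^ ((5:ℝ)/2))
      atTop (𝓝 0) := by
    refine squeeze_zero' ?_ ?_ hub
    · filter_upwards [eventually_ge_atTop (1:ℝ)] with R hR using (key R hR).1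
    · filter_upwards [eventually_ge_atTop (1:ℝ)] with R hR using (key R hR).2
  have h1 := h0.const_mul (2/5 : ℝ)
  simp only [mul_zero] at h1
  convert h1 using 2 with R
  ring


lemma f_bounds {r : ℝ} (hr : 0 < r) :
    0 ≤ Real.sqrt (1 + r ^ 3) - r ^ ((3:ℝ)/2) ∧
    Real.sqrt (1 + r ^ 3) - r ^ ((3:ℝ)/2) ≤ gg r := by
  have h1 : (0:ℝ) < 1 + r ^ 3 := by positivity
  have ht : r ^ ((3:ℝ)/2) = Real.sqrt (r ^ 3) := by
    rw [Real.sqrt_eq_rpow, ← Real.rpow_natCast r 3, ← Real.rpow_mul hr.le]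
    norm_num
  have hsq : Real.sqrt (1 + r ^ 3) ^ 2 = 1 + r ^ 3 := Real.sq_sqrt h1.le
  have htq : (r ^ ((3:ℝ)/2)) ^ 2 = r ^ 3 := by
    rw [ht]; exact Real.sq_sqrt (by positivity)
  have hts : r ^ ((3:ℝ)/2) ≤ Real.sqrt (1 + r ^ 3) := by
    rw [ht]; exact Real.sqrt_le_sqrt (by linarith)
  have htpos : (0:ℝ) < r ^ ((3:ℝ)/2) := by positivity
  have hspos : (0:ℝ) < Real.sqrt (1 + r ^ 3) := Real.sqrt_pos.mpr h1
  refine ⟨by linarith, ?_⟩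
  rw [show gg r = (Real.sqrt (1 + r ^ 3))⁻¹ from rfl, inv_eq_one_div,
    le_div_iff₀ hspos]
  nlinarith [mul_le_mul_of_nonneg_left hts htpos.le, hsq, htq]

lemma f_integrable :
    IntegrableOn (fun r : ℝ => Real.sqrt (1 + r ^ 3) - r ^ ((3:ℝ)/2)) (Ioi 0) := by
  refine Integrable.mono J_integrable ?_ ?_
  · refine (ContinuousOn.aestronglyMeasurable ?_ measurableSet_Ioi)
    intro x hx
    exact (cont_sqrt.continuousAt.continuousWithinAt).sub
      ((Real.continuousAt_rpow_const x _ (Or.inl (ne_of_gt hx))).continuousWithinAt)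
  · rw [ae_restrict_iff' measurableSet_Ioi]
    filter_upwards with r hr
    have hb := f_bounds hr
    have hggnn : 0 ≤ gg r := by
      rw [show gg r = (Real.sqrt (1 + r ^ 3))⁻¹ from rfl]; positivity
    rw [Real.norm_eq_abs, Real.norm_eq_abs, abs_of_nonneg hb.1, abs_of_nonneg hggnn]
    exact hb.2

theorem stmt13 :
    Tendsto
      (fun R : ℝ => (∫ r in (0:ℝ)..R, Real.sqrt (1 + r ^ 3)) - (2 / 5) * R ^ ((5 : ℝ) / 2))
      atTop
      (𝓝 ((2 / 5) * (Real.Gamma (1 / 2) * Real.Gamma (1 / 3) / Real.Gamma (5 / 6)))) ∧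
    ∫ r in Set.Ioi (0 : ℝ), (Real.sqrt (1 + r ^ 3) - r ^ ((3 : ℝ) / 2)) =
      (2 / 5) * (Real.Gamma (1 / 2) * Real.Gamma (1 / 3) / Real.Gamma (5 / 6)) := by
  have hJt : Tendsto (fun R : ℝ => ∫ r in (0:ℝ)..R, gg r) atTop
      (𝓝 (∫ r in Ioi (0:ℝ), gg r)) :=
    intervalIntegral_tendsto_integral_Ioi 0 J_integrable tendsto_id
  have t1 : Tendsto
      (fun R : ℝ => (2/5 * (R * Real.sqrt (1 + R ^ 3)) - 2/5 * R ^ ((5:ℝ)/2))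
        + 3/5 * ∫ r in (0:ℝ)..R, gg r) atTop
      (𝓝 (0 + 3/5 * ∫ r in Ioi (0:ℝ), gg r)) :=
    tail_zero.add (hJt.const_mul (3/5))
  have hval : (0:ℝ) + 3/5 * ∫ r in Ioi (0:ℝ), gg r =
      (2 / 5) * (Real.Gamma (1 / 2) * Real.Gamma (1 / 3) / Real.Gamma (5 / 6)) := by
    rw [J_value, zero_add, ← gamma_arith]
  have e1 : (fun R : ℝ => (2/5 * (R * Real.sqrt (1 + R ^ 3)) - 2/5 * R ^ ((5:ℝ)/2))
        + 3/5 * ∫ r in (0:ℝ)..R, gg r) =ᶠ[atTop]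
      (fun R : ℝ => (∫ r in (0:ℝ)..R, Real.sqrt (1 + r ^ 3)) - (2/5) * R ^ ((5:ℝ)/2)) := by
    filter_upwards [eventually_ge_atTop (0:ℝ)] with R hR
    rw [key_ftc R hR]; ring
  have part1 : Tendsto
      (fun R : ℝ => (∫ r in (0:ℝ)..R, Real.sqrt (1 + r ^ 3)) - (2/5) * R ^ ((5:ℝ)/2))
      atTop (𝓝 ((2 / 5) * (Real.Gamma (1 / 2) * Real.Gamma (1 / 3) / Real.Gamma (5 / 6)))) := by
    rw [← hval]
    exact t1.congr' e1
  refine ⟨part1, ?_⟩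
  have hft : Tendsto
      (fun R : ℝ => ∫ r in (0:ℝ)..R, (Real.sqrt (1 + r ^ 3) - r ^ ((3:ℝ)/2))) atTop
      (𝓝 (∫ r in Ioi (0:ℝ), (Real.sqrt (1 + r ^ 3) - r ^ ((3:ℝ)/2)))) :=
    intervalIntegral_tendsto_integral_Ioi 0 f_integrable tendsto_id
  have e2 : (fun R : ℝ => ∫ r in (0:ℝ)..R, (Real.sqrt (1 + r ^ 3) - r ^ ((3:ℝ)/2)))
      =ᶠ[atTop]
      (fun R : ℝ => (∫ r in (0:ℝ)..R, Real.sqrt (1 + r ^ 3)) - (2/5) * R ^ ((5:ℝ)/2)) := by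
    filter_upwards [eventually_ge_atTop (0:ℝ)] with R hR
    have i1 : IntervalIntegrable (fun r : ℝ => Real.sqrt (1 + r ^ 3)) volume 0 R :=
      cont_sqrt.intervalIntegrable 0 R
    have i2 : IntervalIntegrable (fun r : ℝ => r ^ ((3:ℝ)/2)) volume 0 R :=
      intervalIntegral.intervalIntegrable_rpow' (by norm_num)
    rw [intervalIntegral.integral_sub i1 i2,
      integral_rpow (Or.inl (by norm_num : (-1:ℝ) < 3/2)),
      Real.zero_rpow (by norm_num)]
    norm_num
    ring
  exact tendsto_nhds_unique (hft.congr' e2) part1
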